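/- arXiv:1809.09386 — 5 statements merged into one kernel-verified Lean document; each statement's English description precedes it below -/
import Mathlib

section
/- Let G be a group, α : G → G^fab the free abelianisation map with kernel K, φ : G → ℝ a character factoring through α, and s_α : G^fab → G a set-theoretic section with s_α(1) = 1. Then the ring isomorphism s_α : (ℚK)G^fab → ℚG extends to a ring isomorphism between the Novikov ring Nov((ℚK)G^fab, φ) of the twisted group ring and the Novikov ring Nov(ℚG, φ); explicitly, the map ι sending x : G^fab → ℚK to the function g ↦ x(α(g))(g·s_α(α(g))⁻¹) is a ring isomorphism between the two Novikov rings. -/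
noncomputable section

open scoped Classical

/-- The evaluation homomorphism `G → (Hom(G, ℚ) → ℚ)`; its kernel is the kernel of the
free abelianisation map `α : G → G^fab` (the image of `G` in `H₁(G; ℚ)`). -/
def evalHom (G : Type*) [Group G] :
    G →* ((G →* Multiplicative ℚ) → Multiplicative ℚ) where
  toFun g f := f g
  map_one' := by funext f; simp
  map_mul' a b := by funext f; simp

/-- The kernel `K` of the free abelianisation map. -/
def fabK (G : Type*) [Group G] : Subgroup G := (evalHom G).ker

instance (G : Type*) [Group G] : (fabK G).Normal := MonoidHom.normal_ker _

/-- The free abelianisation `G^fab` of `G`. -/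
abbrev Fab (G : Type*) [Group G] := G ⧸ fabK G

/-- The free abelianisation map `α : G → G^fab`. -/
def fabMap (G : Type*) [Group G] : G →* Fab G := QuotientGroup.mk' (fabK G)

variable {G : Type*} [Group G]

lemma mem_fabK_of_eq_one {g : G} (h : fabMap G g = 1) : g ∈ fabK G := by
  have := MonoidHom.mem_ker.mpr h
  rwa [fabMap, QuotientGroup.ker_mk'] at this

lemma fabMap_eq_one_of_mem {g : G} (h : g ∈ fabK G) : fabMap G g = 1 := by
  exact MonoidHom.mem_ker.mp (by rwa [fabMap, QuotientGroup.ker_mk'])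

/-- Conjugation by `s a` as a map on `K = ker α`. -/
def conjFab (s : Fab G → G) (hs : ∀ a, fabMap G (s a) = a) (a : Fab G)
    (k : ↥(fabK G)) : ↥(fabK G) :=
  ⟨s a * k * (s a)⁻¹, by
    apply mem_fabK_of_eq_one
    have hk : fabMap G (k : G) = 1 := fabMap_eq_one_of_mem k.2
    simp [map_mul, map_inv, hk]⟩

/-- The structure function `ν a` on the coefficient ring `ℚ K`. -/
def nuFab (s : Fab G → G) (hs : ∀ a, fabMap G (s a) = a) (a : Fab G)
    (z : MonoidAlgebra ℚ ↥(fabK G)) : MonoidAlgebra ℚ ↥(fabK G) :=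
  MonoidAlgebra.ofCoeff (Finsupp.mapDomain (conjFab s hs a) z.coeff)

/-- The structure function (`2`-cocycle) `μ (a, b) = s a * s b * (s (a b))⁻¹ ∈ K ⊆ ℚ K`. -/
def muFab (s : Fab G → G) (hs : ∀ a, fabMap G (s a) = a) (a b : Fab G) :
    MonoidAlgebra ℚ ↥(fabK G) :=
  MonoidAlgebra.single
    ⟨s a * s b * (s (a * b))⁻¹, by
      apply mem_fabK_of_eq_one
      simp [map_mul, map_inv, hs, ← mul_assoc]⟩ 1

/-- The twisted convolution on functions `G^fab → ℚ K`, i.e. the multiplication of the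
Novikov ring `Nov((ℚ K) G^fab, φ)`. -/
def mulFab (s : Fab G → G) (hs : ∀ a, fabMap G (s a) = a)
    (x y : Fab G → MonoidAlgebra ℚ ↥(fabK G)) :
    Fab G → MonoidAlgebra ℚ ↥(fabK G) :=
  fun c => ∑ᶠ a : Fab G, x a * nuFab s hs a (y (a⁻¹ * c)) * muFab s hs a (a⁻¹ * c)

/-- The untwisted convolution on functions `G → ℚ`, i.e. the multiplication of the Novikov
ring `Nov(ℚ G, φ)`. -/
def mulG (x y : G → ℚ) : G → ℚ :=
  fun g => ∑ᶠ a : G, x a * y (a⁻¹ * g)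

/-- The Novikov condition over `G^fab`. -/
def NovFabMem (φA : Fab G → ℝ) (x : Fab G → MonoidAlgebra ℚ ↥(fabK G)) : Prop :=
  ∀ κ : ℝ, {a : Fab G | x a ≠ 0 ∧ φA a ≤ κ}.Finite

/-- The Novikov condition over `G`. -/
def NovGMem (φ : G → ℝ) (x : G → ℚ) : Prop :=
  ∀ κ : ℝ, {g : G | x g ≠ 0 ∧ φ g ≤ κ}.Finite

/-- The map `ι` sending `x : G^fab → ℚ K` to `g ↦ x (α g) (g · (s (α g))⁻¹)`. -/
def iotaFab (s : Fab G → G) (hs : ∀ a, fabMap G (s a) = a)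
    (x : Fab G → MonoidAlgebra ℚ ↥(fabK G)) : G → ℚ :=
  fun g => (x (fabMap G g)).coeff
    ⟨g * (s (fabMap G g))⁻¹, by
      apply mem_fabK_of_eq_one
      simp [map_mul, map_inv, hs]⟩

/-- The unit of `Nov((ℚ K) G^fab, φ)`. -/
def oneFab (G : Type*) [Group G] : Fab G → MonoidAlgebra ℚ ↥(fabK G) :=
  fun a => if a = 1 then MonoidAlgebra.single 1 1 else 0

/-- The unit of `Nov(ℚ G, φ)`. -/
def oneG (G : Type*) [Group G] : G → ℚ :=
  fun g => if g = 1 then 1 else 0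

/-! The section `s` gives a bijection `G^fab × K ≃ G`, `(a, u) ↦ u * s a`, through which `ι x` is
just `(a, u) ↦ (x a)(u)`; so `ι` is bijective and additive, and since `φ (u * s a) = φA a` the
Novikov conditions on the two sides correspond. For multiplicativity, conjugating by `s a` and
cancelling the cocycle `μ` turns the coefficient of `g * s(α g)⁻¹` in the `a`-th summand of the
twisted product into the sum, over `u ∈ K`, of the terms of the convolution in `G` indexed by
`u * s a`. All sums are finite because in a Novikov convolution `x a * y (a⁻¹ c)` either `φ a ≤ 0`
or `φ (a⁻¹ c) < φ c`. -/

theorem finite_setOf_mem_and_inv_mul_mem {H : Type*} [Group H] (ψ : H → ℝ)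
    (hψ : ∀ a b, ψ (a * b) = ψ a + ψ b) {X Y : Set H}
    (hX : ∀ κ, {a | a ∈ X ∧ ψ a ≤ κ}.Finite) (hY : ∀ κ, {b | b ∈ Y ∧ ψ b ≤ κ}.Finite)
    (c : H) : {a | a ∈ X ∧ a⁻¹ * c ∈ Y}.Finite := by
  refine ((hX 0).union ((hY (ψ c)).image fun b => c * b⁻¹)).subset ?_
  rintro a ⟨haX, haY⟩
  by_cases ha : ψ a ≤ 0
  · exact Or.inl ⟨haX, ha⟩
  · have : ψ c = ψ a + ψ (a⁻¹ * c) := by rw [← hψ, mul_inv_cancel_left]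
    exact Or.inr ⟨a⁻¹ * c, ⟨haY, by linarith⟩, by group⟩

theorem MonoidAlgebra.coeff_finsum_apply {ι R M : Type*} [Semiring R] [Monoid M]
    {f : ι → MonoidAlgebra R M} (hf : f.HasFiniteSupport) (m : M) :
    (∑ᶠ i, f i).coeff m = ∑ᶠ i, (f i).coeff m :=
  ((Finsupp.applyAddHom m).comp
    (MonoidAlgebra.coeffAddEquiv (R := R) (M := M)).toAddMonoidHom).map_finsum hf

theorem finite_setOf_fst_mem_and_apply_ne_zero {α β M : Type*} [Zero M] (f : α → β →₀ M)
    {A : Set α} (hA : A.Finite) : {p : α × β | p.1 ∈ A ∧ f p.1 p.2 ≠ 0}.Finite :=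
  (hA.prod (hA.biUnion fun a _ => (f a).support.finite_toSet)).subset fun _ hp =>
    ⟨hp.1, Set.mem_biUnion hp.1 (Finsupp.mem_support_iff.2 hp.2)⟩

lemma fabMap_coe_fabK (u : fabK G) : fabMap G u = 1 := fabMap_eq_one_of_mem u.2

lemma phiA_mul {φ : G → ℝ} {φA : Fab G → ℝ} (hfact : ∀ g, φA (fabMap G g) = φ g)
    (hφ : ∀ a b, φ (a * b) = φ a + φ b) (a b : Fab G) : φA (a * b) = φA a + φA b := by
  obtain ⟨g, rfl⟩ : ∃ g, fabMap G g = a := QuotientGroup.mk'_surjective _ a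
  obtain ⟨h, rfl⟩ : ∃ h, fabMap G h = b := QuotientGroup.mk'_surjective _ b
  rw [← map_mul, hfact, hfact, hfact, hφ]

section FabSection

variable (s : Fab G → G) (hs : ∀ a, fabMap G (s a) = a)
include hs

lemma fabMap_mul_section (a : Fab G) (u : fabK G) : fabMap G (u * s a) = a := by
  simp [fabMap_coe_fabK, hs]

def fabKerPart (g : G) : fabK G :=
  ⟨g * (s (fabMap G g))⁻¹, mem_fabK_of_eq_one (by simp [hs])⟩

def fabSectionEquiv : Fab G × fabK G ≃ G where
  toFun p := p.2 * s p.1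
  invFun g := (fabMap G g, fabKerPart s hs g)
  left_inv := by
    rintro ⟨a, u⟩
    have ha := fabMap_mul_section s hs a u
    refine Prod.ext ha (Subtype.ext ?_)
    simp only [fabKerPart, ha, mul_inv_cancel_right]
  right_inv g := by simp [fabKerPart]

lemma forall_mul_section {p : G → Prop} : (∀ g, p g) ↔ ∀ a (u : fabK G), p (u * s a) :=
  ⟨fun h _ _ => h _, fun h => (fabSectionEquiv s hs).surjective.forall.2 fun p => h p.1 p.2⟩

lemma iotaFab_mul_section (x : Fab G → MonoidAlgebra ℚ (fabK G)) (a : Fab G) (u : fabK G) :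
    iotaFab s hs x (u * s a) = (x a).coeff u := by
  change (x ((fabSectionEquiv s hs).symm (fabSectionEquiv s hs (a, u))).1).coeff
    ((fabSectionEquiv s hs).symm (fabSectionEquiv s hs (a, u))).2 = _
  rw [Equiv.symm_apply_apply]

lemma iotaFab_injective : Function.Injective (iotaFab s hs) := by
  intro x y hxy
  funext a
  ext u
  simpa only [iotaFab_mul_section] using congrFun hxy (u * s a)

lemma iotaFab_add (x y : Fab G → MonoidAlgebra ℚ (fabK G)) :
    iotaFab s hs (x + y) = iotaFab s hs x + iotaFab s hs y :=
  rfl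

lemma mul_section_eq_one_iff (hs1 : s 1 = 1) {a : Fab G} {u : fabK G} :
    (u : G) * s a = 1 ↔ a = 1 ∧ u = 1 := by
  constructor
  · intro h
    have ha : a = 1 := by rw [← fabMap_mul_section s hs a u, h, map_one]
    subst ha
    exact ⟨rfl, by simpa [hs1] using h⟩
  · rintro ⟨rfl, rfl⟩
    simp [hs1]

lemma iotaFab_oneFab (hs1 : s 1 = 1) : iotaFab s hs (oneFab G) = oneG G := by
  refine funext ((forall_mul_section s hs).2 fun a u => ?_)
  rw [iotaFab_mul_section, oneG, mul_section_eq_one_iff s hs hs1, oneFab]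
  by_cases ha : a = 1 <;> simp [ha, MonoidAlgebra.coeff_single, Finsupp.single_apply, eq_comm]

lemma conjFab_injective (a : Fab G) : Function.Injective (conjFab s hs a) :=
  fun _ _ h => Subtype.ext (mul_left_cancel (mul_right_cancel (congrArg Subtype.val h)))

lemma coeff_nuFab (a : Fab G) (z : MonoidAlgebra ℚ (fabK G)) (w : fabK G) :
    (nuFab s hs a z).coeff w =
      z.coeff ⟨(s a)⁻¹ * w * s a, mem_fabK_of_eq_one (by simp [fabMap_coe_fabK])⟩ := by
  conv_lhs => rw [show w = conjFab s hs a ⟨(s a)⁻¹ * w * s a,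
    mem_fabK_of_eq_one (by simp [fabMap_coe_fabK])⟩ from
      Subtype.ext (by simp [conjFab, mul_assoc])]
  rw [nuFab, MonoidAlgebra.coeff_ofCoeff, Finsupp.mapDomain_apply (conjFab_injective s hs a)]

lemma coeff_mulFab_summand (x y : Fab G → MonoidAlgebra ℚ (fabK G)) (g : G) (a : Fab G) :
    (x a * nuFab s hs a (y (a⁻¹ * fabMap G g)) * muFab s hs a (a⁻¹ * fabMap G g)).coeff
        (fabKerPart s hs g) =
      ∑ᶠ u : fabK G, iotaFab s hs x (u * s a) * iotaFab s hs y ((u * s a)⁻¹ * g) := by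
  rw [muFab, MonoidAlgebra.coeff_mul_single_apply, mul_one, MonoidAlgebra.coeff_mul_apply_left,
    Finsupp.sum, finsum_eq_sum_of_support_subset (s := (x a).coeff.support)]
  · refine Finset.sum_congr rfl fun u _ => ?_
    rw [coeff_nuFab, iotaFab_mul_section, ← iotaFab_mul_section s hs y]
    congr 2
    simp only [fabKerPart, Subgroup.coe_mul, InvMemClass.coe_inv, mul_inv_cancel_left]
    group
  · intro u hu
    simp only [Function.mem_support, iotaFab_mul_section] at hu
    exact Finsupp.mem_support_iff.2 (left_ne_zero_of_mul hu)

variable {φ : G → ℝ} {φA : Fab G → ℝ} (hfact : ∀ g, φA (fabMap G g) = φ g)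
include hfact

lemma phi_mul_section (a : Fab G) (u : fabK G) : φ (u * s a) = φA a := by
  rw [← hfact, fabMap_mul_section s hs]

lemma novGMem_iotaFab {x : Fab G → MonoidAlgebra ℚ (fabK G)} (hx : NovFabMem φA x) :
    NovGMem φ (iotaFab s hs x) := by
  intro κ
  refine ((finite_setOf_fst_mem_and_apply_ne_zero (fun a => (x a).coeff) (hx κ)).image
    (fabSectionEquiv s hs)).subset ?_
  rintro g ⟨hg, hgκ⟩
  obtain ⟨⟨a, u⟩, rfl⟩ := (fabSectionEquiv s hs).surjective g
  change iotaFab s hs x (u * s a) ≠ 0 at hg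
  change φ (u * s a) ≤ κ at hgκ
  rw [iotaFab_mul_section] at hg
  rw [phi_mul_section s hs hfact] at hgκ
  exact ⟨(a, u), ⟨⟨fun h => hg (by simp [h]), hgκ⟩, hg⟩, rfl⟩

lemma exists_novFabMem_iotaFab_eq {y : G → ℚ} (hy : NovGMem φ y) :
    ∃ x, NovFabMem φA x ∧ iotaFab s hs x = y := by
  have hfin (a : Fab G) : (Function.support fun u : fabK G => y (u * s a)).Finite := by
    refine ((hy (φA a)).preimage (mul_left_injective (s a)).injOn |>.preimage
      Subtype.val_injective.injOn).subset fun u hu => ⟨hu, ?_⟩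
    exact (phi_mul_section s hs hfact a u).le
  refine ⟨fun a => .ofCoeff (Finsupp.ofSupportFinite _ (hfin a)), fun κ => ?_, ?_⟩
  · refine ((hy κ).image (fabMap G)).subset ?_
    rintro a ⟨ha, haκ⟩
    obtain ⟨u, hu⟩ : ∃ u : fabK G, y (u * s a) ≠ 0 := by
      by_contra! h
      exact ha (by ext u; simp [Finsupp.ofSupportFinite_coe, h])
    exact ⟨u * s a, ⟨hu, by rwa [phi_mul_section s hs hfact]⟩, fabMap_mul_section s hs a u⟩
  · refine funext ((forall_mul_section s hs).2 fun a u => ?_)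
    simp [iotaFab_mul_section, Finsupp.ofSupportFinite_coe]

lemma iotaFab_mulFab (hφ : ∀ a b, φ (a * b) = φ a + φ b)
    {x y : Fab G → MonoidAlgebra ℚ (fabK G)} (hx : NovFabMem φA x) (hy : NovFabMem φA y) :
    iotaFab s hs (mulFab s hs x y) = mulG (iotaFab s hs x) (iotaFab s hs y) := by
  funext g
  set F : G → ℚ := fun h => iotaFab s hs x h * iotaFab s hs y (h⁻¹ * g)
  have hF : F.HasFiniteSupport :=
    (finite_setOf_mem_and_inv_mul_mem φ hφ (novGMem_iotaFab s hs hfact hx)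
      (novGMem_iotaFab s hs hfact hy) g).subset fun h hh =>
        ⟨left_ne_zero_of_mul hh, right_ne_zero_of_mul hh⟩
  have hsummands : (Function.support fun a =>
      x a * nuFab s hs a (y (a⁻¹ * fabMap G g)) * muFab s hs a (a⁻¹ * fabMap G g)).Finite :=
    (finite_setOf_mem_and_inv_mul_mem φA (phiA_mul hfact hφ) hx hy (fabMap G g)).subset
      fun a ha => ⟨fun h => ha (by simp [h]), fun h => ha (by simp [h, nuFab])⟩
  calc iotaFab s hs (mulFab s hs x y) g
      = ∑ᶠ a, (x a * nuFab s hs a (y (a⁻¹ * fabMap G g)) *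
          muFab s hs a (a⁻¹ * fabMap G g)).coeff (fabKerPart s hs g) :=
        MonoidAlgebra.coeff_finsum_apply hsummands _
    _ = ∑ᶠ (a) (u : fabK G), F (u * s a) := finsum_congr (coeff_mulFab_summand s hs x y g)
    _ = ∑ᶠ p, F (fabSectionEquiv s hs p) :=
        (finsum_curry _ (hF.preimage (fabSectionEquiv s hs).injective.injOn)).symm
    _ = mulG (iotaFab s hs x) (iotaFab s hs y) g := finsum_comp_equiv _

end FabSection

/-- Let `G` be a group, `α : G → G^fab` the free abelianisation map with
kernel `K`, `φ : G → ℝ` a character factoring through `α` (via `φA`), and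
`s : G^fab → G` a set-theoretic section with `s 1 = 1`.  Then the ring isomorphism
`s : (ℚ K) G^fab → ℚ G` extends to a ring isomorphism between the Novikov rings
`Nov((ℚ K) G^fab, φ)` and `Nov(ℚ G, φ)`; explicitly, the map `ι` sending
`x : G^fab → ℚ K` to `g ↦ x (α g) (g · s (α g)⁻¹)` restricts to an additive,
multiplicative, unit-preserving bijection between the two Novikov rings. -/
theorem stmt_5 (s : Fab G → G) (hs : ∀ a, fabMap G (s a) = a) (hs1 : s 1 = 1)
    (φ : G → ℝ) (hφ : ∀ a b : G, φ (a * b) = φ a + φ b)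
    (φA : Fab G → ℝ) (hfact : ∀ g : G, φA (fabMap G g) = φ g) :
    (∀ x : Fab G → MonoidAlgebra ℚ ↥(fabK G), NovFabMem φA x →
      NovGMem φ (iotaFab s hs x)) ∧
    (Set.InjOn (iotaFab s hs) {x | NovFabMem φA x}) ∧
    (∀ y : G → ℚ, NovGMem φ y →
      ∃ x : Fab G → MonoidAlgebra ℚ ↥(fabK G), NovFabMem φA x ∧ iotaFab s hs x = y) ∧
    (∀ x y : Fab G → MonoidAlgebra ℚ ↥(fabK G),
      iotaFab s hs (x + y) = iotaFab s hs x + iotaFab s hs y) ∧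
    (∀ x y : Fab G → MonoidAlgebra ℚ ↥(fabK G), NovFabMem φA x → NovFabMem φA y →
      iotaFab s hs (mulFab s hs x y) = mulG (iotaFab s hs x) (iotaFab s hs y)) ∧
    (iotaFab s hs (oneFab G) = oneG G) :=
  ⟨fun _ hx => novGMem_iotaFab s hs hfact hx,
    (iotaFab_injective s hs).injOn,
    fun _ hy => exists_novFabMem_iotaFab_eq s hs hfact hy,
    iotaFab_add s hs,
    fun _ _ hx hy => iotaFab_mulFab s hs hfact hφ hx hy,
    iotaFab_oneFab s hs hs1⟩
end
end

section
/- Let G be a finitely generated group and φ : G → ℤ a nontrivial homomorphism. Then ker φ is finitely generated if and only if both φ and −φ lie in the Bieri–Neumann–Strebel invariant Σ(G). -/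
/-- The full subgraph of the Cayley graph of `G` (with respect to the generating set `T`)
spanned by `{g : ψ g ≥ 0}` is connected: any two vertices with nonnegative `ψ`-value are
joined by an edge-path through vertices of nonnegative `ψ`-value.  For a nonzero character
`ψ`, this is the defining condition for `ψ` to lie in the BNS invariant `Σ(G)`. -/
def connPos {G : Type*} [Group G] (T : Set G) (ψ : G → ℝ) : Prop :=
  ∀ g h : G, 0 ≤ ψ g → 0 ≤ ψ h →
    ∃ (n : ℕ) (p : ℕ → G), p 0 = g ∧ p n = h ∧ (∀ i ≤ n, 0 ≤ ψ (p i)) ∧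
      ∀ i < n, ∃ t ∈ T, p (i + 1) = p i * t ∨ p (i + 1) = p i * t⁻¹

/-!
After rescaling, `φ` is onto; pick `τ` with `φ τ = 1`.

If `ker φ` is generated by a finite set `S`, each element of `S ∪ {τ}` is joined to `1` by a
path dipping at most `D` below height `0`. Writing `y = x τ^k n` with `n ∈ ker φ`, any two
vertices are then joined by a path dipping at most `D` below both of them. To connect two
points of `{φ ≥ 0}`, first lift them high enough along powers of an element `c` with
`φ c > 0` that is reached from `1` without going below `0` (read a path from `1` to `τ`
starting at its lowest point). For `-φ` exchange `τ` and `τ⁻¹`.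

Conversely, put `ŝ = s τ^(-φ s)` for the generators `s^{±1}`. Following a path from `1` to
`n ∈ ker φ` inside `{φ ≥ 0}` writes `n` as a product of conjugates `τ^i ŝ τ^(-i)` with
`i ≥ 0`. Connectivity of `{φ ≤ 0}` expresses each `τ ŝ τ⁻¹` through conjugates with
`-b ≤ i ≤ 0`, so by induction on `i` all conjugates with `i ≥ 0` lie in the subgroup
generated by the finitely many with `0 ≤ i ≤ b`.
-/

theorem MonoidHom.exists_eq_pow_of_ne_one {G : Type*} [Group G] (φ : G →* Multiplicative ℤ)
    (hφ : φ ≠ 1) :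
    ∃ (χ : G →* Multiplicative ℤ) (m : ℕ) (τ : G), 0 < m ∧ χ τ = .ofAdd 1 ∧ φ = χ ^ m := by
  obtain ⟨a, ha⟩ := Int.subgroup_cyclic φ.toAdditiveLeft.range
  set m := a.natAbs
  have hvalues (n : ℤ) : (∃ x, (φ x).toAdd = n) ↔ (m : ℤ) ∣ n := by
    rw [Int.natAbs_dvd, ← Int.mem_zmultiples_iff, AddSubgroup.zmultiples_eq_closure, ← ha]
    exact ⟨fun ⟨x, hx⟩ ↦ ⟨.ofMul x, hx⟩, fun ⟨x, hx⟩ ↦ ⟨x.toMul, hx⟩⟩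
  have hdvd (x : G) : (m : ℤ) ∣ (φ x).toAdd := (hvalues _).1 ⟨x, rfl⟩
  have hm : 0 < m := by
    refine Nat.pos_of_ne_zero fun hm ↦ hφ (MonoidHom.ext fun x ↦ ?_)
    simpa [hm] using hdvd x
  obtain ⟨τ, hτ⟩ := (hvalues m).2 dvd_rfl
  let χ : G →* Multiplicative ℤ := MonoidHom.mk' (fun x ↦ .ofAdd ((φ x).toAdd / m))
    fun x y ↦ by simp [Int.add_ediv_of_dvd_left (hdvd x)]
  refine ⟨χ, m, τ, hm, by simp [χ, hτ, hm.ne'], MonoidHom.ext fun x ↦ ?_⟩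
  apply Multiplicative.toAdd.injective
  simp [χ, Int.mul_ediv_cancel' (hdvd x)]

theorem MonoidHom.ker_inv {G A : Type*} [Group G] [CommGroup A] (χ : G →* A) :
    χ⁻¹.ker = χ.ker := by
  ext x
  simp [MonoidHom.mem_ker]

open Relation

section CayleyPaths

variable {G : Type*} [Group G] {T U V : Set G} {x y : G}

def CayleyAdj (T U : Set G) (x y : G) : Prop :=
  x ∈ U ∧ y ∈ U ∧ ∃ t ∈ T, y = x * t ∨ y = x * t⁻¹

instance (T U : Set G) : Std.Symm (CayleyAdj T U) where
  symm _ _ := by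
    rintro ⟨hx, hy, t, ht, rfl | rfl⟩
    · exact ⟨hy, hx, t, ht, .inr (by group)⟩
    · exact ⟨hy, hx, t, ht, .inl (by group)⟩

def CayleyConnected (T U : Set G) : Prop :=
  ∀ x ∈ U, ∀ y ∈ U, ReflTransGen (CayleyAdj T U) x y

theorem mem_of_reflTransGen_cayleyAdj (h : ReflTransGen (CayleyAdj T U) x y) (hx : x ∈ U) :
    y ∈ U := by
  induction h with
  | refl => exact hx
  | tail _ hyz => exact hyz.2.1

theorem reflTransGen_cayleyAdj_mul_left (g : G) (hUV : ∀ u ∈ U, g * u ∈ V)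
    (h : ReflTransGen (CayleyAdj T U) x y) : ReflTransGen (CayleyAdj T V) (g * x) (g * y) :=
  h.lift (g * ·) fun _ _ ⟨hx, hy, t, ht, hxy⟩ ↦
    ⟨hUV _ hx, hUV _ hy, t, ht, by rcases hxy with rfl | rfl <;> simp [mul_assoc]⟩

theorem connPos_iff_cayleyConnected (T : Set G) (ψ : G → ℝ) :
    connPos T ψ ↔ CayleyConnected T {x | 0 ≤ ψ x} := by
  refine ⟨fun h g hg k hk ↦ ?_, fun h g k hg hk ↦ ?_⟩
  · obtain ⟨n, p, rfl, rfl, hp, hstep⟩ := h g k hg hk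
    suffices ∀ i ≤ n, ReflTransGen (CayleyAdj T {x | 0 ≤ ψ x}) (p 0) (p i) from this n le_rfl
    intro i hi
    induction i with
    | zero => rfl
    | succ i ih => exact (ih (by omega)).tail ⟨hp i (by omega), hp (i + 1) hi, hstep i hi⟩
  · induction h g hg k hk with
    | refl => exact ⟨0, fun _ ↦ g, rfl, rfl, fun _ _ ↦ hg, fun _ h ↦ absurd h (Nat.not_lt_zero _)⟩
    | @tail y z _ hyz ih =>
      obtain ⟨n, p, hp0, hpn, hp, hstep⟩ := ih hyz.1
      refine ⟨n + 1, Function.update p (n + 1) z, by simp [hp0], by simp, fun i hi ↦ ?_,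
        fun i hi ↦ ?_⟩
      · rcases hi.lt_or_eq with hi | rfl
        · simpa [Function.update_of_ne hi.ne] using hp i (by omega)
        · simpa using hyz.2.1
      · rcases (Nat.lt_succ_iff.1 hi).lt_or_eq with hi | rfl
        · simpa [Function.update_of_ne (show i + 1 ≠ n + 1 by omega),
            Function.update_of_ne (show i ≠ n + 1 by omega)] using hstep i hi
        · simpa [hpn] using hyz.2.2

end CayleyPaths

section Superlevel

variable {G : Type*} [Group G] {T : Set G} {χ : G →* Multiplicative ℤ} {b c : ℤ} {x y z : G}

def superlevel (χ : G →* Multiplicative ℤ) (b : ℤ) : Set G := {x | b ≤ (χ x).toAdd}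

theorem mem_superlevel : x ∈ superlevel χ b ↔ b ≤ (χ x).toAdd := Iff.rfl

abbrev LevelReach (T : Set G) (χ : G →* Multiplicative ℤ) (b : ℤ) : G → G → Prop :=
  ReflTransGen (CayleyAdj T (superlevel χ b))

theorem LevelReach.mono (hcb : c ≤ b) (h : LevelReach T χ b x y) : LevelReach T χ c x y :=
  ReflTransGen.mono (fun _ _ ⟨hx, hy, hxy⟩ ↦ ⟨hcb.trans hx, hcb.trans hy, hxy⟩) _ _ h

theorem LevelReach.mul_left (g : G) (h : LevelReach T χ b x y) :
    LevelReach T χ (b + (χ g).toAdd) (g * x) (g * y) :=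
  reflTransGen_cayleyAdj_mul_left g (fun u hu ↦ by
    simp only [mem_superlevel, map_mul, toAdd_mul] at hu ⊢
    omega) h

theorem LevelReach.symm (h : LevelReach T χ b x y) : LevelReach T χ b y x :=
  Std.Symm.symm _ _ h

theorem exists_levelReach_one (hT : Subgroup.closure T = ⊤) (χ : G →* Multiplicative ℤ)
    (w : G) : ∃ b, LevelReach T χ b 1 w := by
  induction (hT ▸ Subgroup.mem_top w : w ∈ Subgroup.closure T) using Subgroup.closure_induction
    with
  | mem t ht =>
    exact ⟨min 0 (χ t).toAdd, .single ⟨by simp [mem_superlevel], by simp [mem_superlevel],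
      t, ht, .inl (one_mul t).symm⟩⟩
  | one => exact ⟨0, .refl⟩
  | mul x y _ _ hx hy =>
    obtain ⟨b, hb⟩ := hx
    obtain ⟨c, hc⟩ := hy
    have hxy : LevelReach T χ (c + (χ x).toAdd) x (x * y) := by simpa using hc.mul_left x
    exact ⟨min b (c + (χ x).toAdd), (hb.mono (min_le_left _ _)).trans
      (hxy.mono (min_le_right _ _))⟩
  | inv x _ hx =>
    obtain ⟨b, hb⟩ := hx
    have hback := hb.mul_left x⁻¹
    simp only [mul_one, inv_mul_cancel, map_inv, toAdd_inv, ← sub_eq_add_neg] at hback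
    exact ⟨_, hback.symm⟩

theorem exists_levelReach_one_of_finite (hT : Subgroup.closure T = ⊤)
    (χ : G →* Multiplicative ℤ) {F : Set G} (hF : F.Finite) :
    ∃ b, ∀ w ∈ F, LevelReach T χ b 1 w :=
  (hF.eventually_all.2 fun w _ ↦ Filter.eventually_atBot.2
    ((exists_levelReach_one hT χ w).imp fun _ hb _ hcb ↦ hb.mono hcb)).exists

theorem LevelReach.pow (hz : 0 ≤ (χ z).toAdd) (h : LevelReach T χ b 1 z) :
    ∀ k : ℕ, LevelReach T χ b 1 (z ^ k)
  | 0 => by simpa using ReflTransGen.refl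
  | k + 1 => by
    have hstep : LevelReach T χ (b + k * (χ z).toAdd) (z ^ k) (z ^ (k + 1)) := by
      simpa [pow_succ] using h.mul_left (z ^ k)
    exact (h.pow hz k).trans (hstep.mono (by nlinarith))

theorem LevelReach.of_mem_closure {S : Set G} (hS : Subgroup.closure S ≤ χ.ker)
    (h : ∀ s ∈ S, LevelReach T χ b 1 s) {n : G} (hn : n ∈ Subgroup.closure S) :
    LevelReach T χ b 1 n := by
  have height (x) (hx : x ∈ Subgroup.closure S) : (χ x).toAdd = 0 := by
    simpa using hS hx
  induction hn using Subgroup.closure_induction with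
  | mem s hs => exact h s hs
  | one => exact .refl
  | mul x y hx _ ihx ihy =>
    have hxy : LevelReach T χ b x (x * y) := by simpa [height x hx] using ihy.mul_left x
    exact ihx.trans hxy
  | inv x hx ih => simpa [height x hx] using (ih.mul_left x⁻¹).symm

theorem exists_levelReach_of_ker_fg (hT : Subgroup.closure T = ⊤) {τ : G}
    (hτ : χ τ = .ofAdd 1) (hK : χ.ker.FG) :
    ∃ b, ∀ x y, LevelReach T χ (min (χ x).toAdd (χ y).toAdd + b) x y := by
  obtain ⟨S, hS, hSfin⟩ := (Subgroup.fg_iff _).1 hK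
  obtain ⟨b, hb⟩ := exists_levelReach_one_of_finite hT χ (hSfin.insert τ)
  have hker (n) (hn : n ∈ χ.ker) : LevelReach T χ b 1 n :=
    LevelReach.of_mem_closure hS.le (fun s hs ↦ hb s (.inr hs)) (hS ▸ hn)
  have hup (x) (k : ℕ) : LevelReach T χ ((χ x).toAdd + b) x (x * τ ^ k) := by
    simpa [add_comm] using ((hb τ (.inl rfl)).pow (by simp [hτ]) k).mul_left x
  suffices key : ∀ x y, (χ x).toAdd ≤ (χ y).toAdd → LevelReach T χ ((χ x).toAdd + b) x y by
    refine ⟨b, fun x y ↦ ?_⟩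
    rcases le_total (χ x).toAdd (χ y).toAdd with h | h
    · simpa [min_eq_left h] using key x y h
    · simpa [min_eq_right h] using (key y x h).symm
  intro x y hxy
  -- `y = x τ^k n` with `n` in the kernel
  set k := ((χ y).toAdd - (χ x).toAdd).toNat
  have hk : (χ (x * τ ^ k)).toAdd = (χ y).toAdd := by simp [hτ, k]; omega
  have hn : (x * τ ^ k)⁻¹ * y ∈ χ.ker := by
    rw [MonoidHom.mem_ker, ← toAdd_eq_zero]; simp [← hk]
  have hlast := (hker _ hn).mul_left (x * τ ^ k)
  rw [mul_one, mul_inv_cancel_left, hk] at hlast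
  exact (hup x k).trans (hlast.mono (by omega))

theorem exists_lowest_of_reflTransGen {U : Set G} (h : ReflTransGen (CayleyAdj T U) x y) :
    ∃ p, LevelReach T χ (χ p).toAdd x p ∧ LevelReach T χ (χ p).toAdd p y := by
  induction h with
  | refl => exact ⟨x, .refl, .refl⟩
  | @tail y z _ hyz ih =>
    obtain ⟨p, hxp, hpy⟩ := ih
    obtain ⟨-, -, hstep⟩ := hyz
    have hy := mem_superlevel.1 (mem_of_reflTransGen_cayleyAdj hpy (mem_superlevel.2 le_rfl))
    rcases le_or_gt (χ p).toAdd (χ z).toAdd with hz | hz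
    · exact ⟨p, hxp, hpy.tail ⟨hy, hz, hstep⟩⟩
    · exact ⟨z, (LevelReach.mono hz.le (hxp.trans hpy)).tail
        ⟨mem_superlevel.2 (by omega), mem_superlevel.2 le_rfl, hstep⟩, .refl⟩

theorem exists_climb (hT : Subgroup.closure T = ⊤) {τ : G} (hτ : 0 < (χ τ).toAdd) :
    ∃ c, 0 < (χ c).toAdd ∧ LevelReach T χ 0 1 c := by
  obtain ⟨b, hb⟩ := exists_levelReach_one hT χ τ
  obtain ⟨p, h1p, hpτ⟩ := exists_lowest_of_reflTransGen (χ := χ) hb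
  -- run the path `1 → τ` starting from its lowest point `p`, then wrap around
  refine ⟨p⁻¹ * τ * p, by simpa using hτ, ?_⟩
  have first : LevelReach T χ 0 1 (p⁻¹ * τ) := by simpa using hpτ.mul_left p⁻¹
  have second : LevelReach T χ (χ τ).toAdd (p⁻¹ * τ) (p⁻¹ * τ * p) := by
    simpa using h1p.mul_left (p⁻¹ * τ)
  exact first.trans (second.mono hτ.le)

theorem cayleyConnected_superlevel_of_ker_fg (hT : Subgroup.closure T = ⊤) {τ : G}
    (hτ : χ τ = .ofAdd 1) (hK : χ.ker.FG) : CayleyConnected T (superlevel χ 0) := by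
  obtain ⟨b, hb⟩ := exists_levelReach_of_ker_fg hT hτ hK
  obtain ⟨c, hc, hc1⟩ := exists_climb hT (χ := χ) (τ := τ) (by simp [hτ])
  set k := (-b).toNat
  have climb (x) (hx : x ∈ superlevel χ 0) :
      LevelReach T χ 0 x (x * c ^ k) ∧ -b ≤ (χ (x * c ^ k)).toAdd := by
    rw [mem_superlevel] at hx
    have hpath := (hc1.pow hc.le k).mul_left x
    rw [zero_add, mul_one] at hpath
    refine ⟨hpath.mono hx, ?_⟩
    simp only [map_mul, map_pow, toAdd_mul, toAdd_pow, nsmul_eq_mul]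
    nlinarith [Int.self_le_toNat (-b)]
  intro g hg h hh
  obtain ⟨hg1, hg2⟩ := climb g hg
  obtain ⟨hh1, hh2⟩ := climb h hh
  exact hg1.trans (((hb _ _).mono (by omega)).trans hh1.symm)

end Superlevel

section KernelGenerators

open Pointwise Subgroup

variable {G : Type*} [Group G] {T U : Set G} {χ : G →* Multiplicative ℤ} {τ x : G}
  {I J : Set ℤ}

def kerPart (χ : G →* Multiplicative ℤ) (τ x : G) : G := x * τ ^ (-(χ x).toAdd)

theorem kerPart_mul (y : G) : kerPart χ τ (x * y) =
    kerPart χ τ x * (τ ^ (χ x).toAdd * kerPart χ τ y * τ ^ (-(χ x).toAdd)) := by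
  simp only [kerPart, map_mul, toAdd_mul, neg_add, zpow_add]
  group

theorem kerPart_of_mem_ker (hx : x ∈ χ.ker) : kerPart χ τ x = x := by
  simp_all [kerPart, MonoidHom.mem_ker]

theorem kerPart_mem_ker (hτ : χ τ = .ofAdd 1) (x : G) : kerPart χ τ x ∈ χ.ker := by
  rw [MonoidHom.mem_ker, ← toAdd_eq_zero]
  simp [kerPart, hτ]

def kerGens (T : Set G) (χ : G →* Multiplicative ℤ) (τ : G) (I : Set ℤ) : Set G :=
  Set.image2 (fun i t ↦ τ ^ i * kerPart χ τ t * τ ^ (-i)) I (T ∪ T⁻¹)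

theorem kerGens_mono (hIJ : I ⊆ J) : kerGens T χ τ I ⊆ kerGens T χ τ J :=
  Set.image2_subset_right hIJ

theorem kerGens_finite (hT : T.Finite) (hI : I.Finite) : (kerGens T χ τ I).Finite :=
  hI.image2 _ (hT.union hT.inv)

theorem kerGens_subset_ker (hτ : χ τ = .ofAdd 1) : kerGens T χ τ I ⊆ χ.ker := by
  rintro _ ⟨i, -, t, -, rfl⟩
  rw [SetLike.mem_coe, MonoidHom.mem_ker, ← toAdd_eq_zero]
  simp [kerPart, hτ]

theorem conj_mem_closure_kerGens (k : ℤ) (hIJ : ∀ i ∈ I, i + k ∈ J)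
    (hx : x ∈ closure (kerGens T χ τ I)) :
    τ ^ k * x * τ ^ (-k) ∈ closure (kerGens T χ τ J) := by
  have hle : closure (kerGens T χ τ I) ≤
      (closure (kerGens T χ τ J)).comap (MulAut.conj (τ ^ k)).toMonoidHom := by
    refine (closure_le _).2 ?_
    rintro _ ⟨i, hi, t, ht, rfl⟩
    refine subset_closure ⟨i + k, hIJ i hi, t, ht, ?_⟩
    simp only [MulEquiv.coe_toMonoidHom, MulAut.conj_apply, zpow_add, neg_add]
    group
  have := hle hx
  rwa [mem_comap, MulEquiv.coe_toMonoidHom, MulAut.conj_apply, ← zpow_neg] at this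

theorem exists_kerPart_mem_closure (hU : ∀ u ∈ U, (χ u).toAdd ∈ I)
    (h : ReflTransGen (CayleyAdj T U) 1 x) :
    ∃ B, kerPart χ τ x ∈ closure (kerGens T χ τ (I ∩ Set.Icc (-B) B)) := by
  induction h with
  | refl => exact ⟨0, by simp [kerPart]⟩
  | @tail y z _ hyz ih =>
    obtain ⟨B, hB⟩ := ih
    obtain ⟨hy, -, t, ht, hz⟩ := hyz
    obtain ⟨s, hs, rfl⟩ : ∃ s ∈ T ∪ T⁻¹, z = y * s := by
      rcases hz with rfl | rfl
      exacts [⟨t, .inl ht, rfl⟩, ⟨t⁻¹, .inr (by simpa using ht), rfl⟩]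
    refine ⟨max B |(χ y).toAdd|, ?_⟩
    rw [kerPart_mul]
    refine mul_mem (closure_mono (kerGens_mono ?_) hB)
      (subset_closure ⟨_, ⟨hU y hy, abs_le.1 (le_max_right _ _)⟩, s, hs, rfl⟩)
    exact Set.inter_subset_inter_right _ (Set.Icc_subset_Icc (by simp) (le_max_left _ _))

theorem exists_conj_mem_closure_kerGens (hT : T.Finite) (hτ : χ τ = .ofAdd 1)
    (hneg : CayleyConnected T (superlevel χ⁻¹ 0)) :
    ∃ b ≥ 0, ∀ t ∈ T ∪ T⁻¹,
      τ * kerPart χ τ t * τ⁻¹ ∈ closure (kerGens T χ τ (Set.Icc (-b) 0)) := by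
  refine ((Filter.eventually_ge_atTop 0).and
    ((hT.union hT.inv).eventually_all.2 fun t _ ↦ ?_)).exists
  set n := τ * kerPart χ τ t * τ⁻¹
  have hn : n ∈ χ.ker := (MonoidHom.normal_ker χ).conj_mem _ (kerPart_mem_ker hτ t) τ
  have hn0 : n ∈ superlevel χ⁻¹ 0 := by simp_all [mem_superlevel, MonoidHom.mem_ker]
  obtain ⟨B, hB⟩ := exists_kerPart_mem_closure (τ := τ) (I := Set.Iic 0)
    (fun u hu ↦ by simpa [mem_superlevel] using hu) (hneg 1 (by simp [mem_superlevel]) n hn0)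
  rw [kerPart_of_mem_ker hn] at hB
  refine Filter.eventually_atTop.2 ⟨B, fun b hb ↦ closure_mono (kerGens_mono ?_) hB⟩
  exact fun i ⟨hi0, hiB, _⟩ ↦ ⟨by omega, hi0⟩

theorem kerGens_Icc_subset_closure {b : ℤ}
    (hb : ∀ t ∈ T ∪ T⁻¹, τ * kerPart χ τ t * τ⁻¹ ∈ closure (kerGens T χ τ (Set.Icc (-b) 0))) :
    ∀ k : ℕ, kerGens T χ τ (Set.Icc 0 (b + k)) ⊆ closure (kerGens T χ τ (Set.Icc 0 b))
  | 0 => by rw [Nat.cast_zero, add_zero]; exact subset_closure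
  | k + 1 => by
    have ih := kerGens_Icc_subset_closure hb k
    rintro _ ⟨i, ⟨hi0, hik⟩, t, ht, rfl⟩
    rcases le_or_gt i (b + k) with hik' | hik'
    · exact ih ⟨i, ⟨hi0, hik'⟩, t, ht, rfl⟩
    -- the generator at height `i` is a conjugate of the one at height `1`
    have hconj := conj_mem_closure_kerGens (i - 1) (J := Set.Icc 0 (b + k))
      (fun j hj ↦ by simp only [Set.mem_Icc] at hj ⊢; omega) (hb t ht)
    have heq : τ ^ (i - 1) * (τ * kerPart χ τ t * τ⁻¹) * τ ^ (-(i - 1)) =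
        τ ^ i * kerPart χ τ t * τ ^ (-i) := by
      group
    rw [heq] at hconj
    exact (closure_le _).2 ih hconj

theorem ker_fg_of_cayleyConnected (hT : T.Finite) (hτ : χ τ = .ofAdd 1)
    (hpos : CayleyConnected T (superlevel χ 0)) (hneg : CayleyConnected T (superlevel χ⁻¹ 0)) :
    χ.ker.FG := by
  obtain ⟨b, hb0, hb⟩ := exists_conj_mem_closure_kerGens hT hτ hneg
  refine (Subgroup.fg_iff _).2 ⟨kerGens T χ τ (Set.Icc 0 b),
    le_antisymm ((closure_le _).2 (kerGens_subset_ker hτ)) fun n hn ↦ ?_,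
    kerGens_finite hT (Set.finite_Icc 0 b)⟩
  have hn0 : n ∈ superlevel χ 0 := by simp_all [mem_superlevel, MonoidHom.mem_ker]
  obtain ⟨B, hB⟩ := exists_kerPart_mem_closure (τ := τ) (I := Set.Ici 0) (fun u hu ↦ hu)
    (hpos 1 (by simp [mem_superlevel]) n hn0)
  rw [kerPart_of_mem_ker hn] at hB
  refine (closure_le _).2 ((kerGens_mono ?_).trans (kerGens_Icc_subset_closure hb B.toNat)) hB
  exact fun i ⟨hi0, _, hiB⟩ ↦ ⟨hi0, by omega⟩

end KernelGenerators

/-- **Bieri–Neumann–Strebel.** Let `G` be a finitely generated group (with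
finite generating set `T`) and `φ : G → ℤ` a nontrivial homomorphism.  Then `ker φ` is
finitely generated if and only if both `φ` and `-φ` lie in the BNS invariant `Σ(G)`. -/
theorem stmt_6 {G : Type*} [Group G] (T : Finset G)
    (hT : Subgroup.closure (T : Set G) = ⊤)
    (φ : G →* Multiplicative ℤ) (hφ : φ ≠ 1) :
    φ.ker.FG ↔
      (connPos (T : Set G) (fun g => ((Multiplicative.toAdd (φ g) : ℤ) : ℝ)) ∧
       connPos (T : Set G) (fun g => -((Multiplicative.toAdd (φ g) : ℤ) : ℝ))) := by
  obtain ⟨χ, m, τ, hm, hτ, rfl⟩ := φ.exists_eq_pow_of_ne_one hφ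
  have hker : (χ ^ m).ker = χ.ker := by
    ext x
    simp [MonoidHom.mem_ker, hm.ne']
  have hm' : (0 : ℝ) < m := mod_cast hm
  have hpos : {x | 0 ≤ (((χ ^ m) x).toAdd : ℝ)} = superlevel χ 0 := by
    ext x
    simp [mem_superlevel, mul_nonneg_iff_of_pos_left hm']
  have hneg : {x | 0 ≤ -(((χ ^ m) x).toAdd : ℝ)} = superlevel χ⁻¹ 0 := by
    ext x
    simp [mem_superlevel, ← mul_neg, mul_nonneg_iff_of_pos_left hm']
  simp only [connPos_iff_cayleyConnected, hpos, hneg, hker]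
  exact ⟨fun hK ↦ ⟨cayleyConnected_superlevel_of_ker_fg hT hτ hK,
      cayleyConnected_superlevel_of_ker_fg (τ := τ⁻¹) hT (by simp [hτ])
        (by rwa [MonoidHom.ker_inv])⟩,
    fun ⟨h1, h2⟩ ↦ ker_fg_of_cayleyConnected T.finite_toSet hτ h1 h2⟩
end

section
/- Let G be a group with a biordering ≤ and let RG be a twisted group ring over a skew-field R (i.e., R is a division ring and the coefficient ring of the twisted group ring is a division ring). Then the set F_≤(RG) of functions x : G → R whose support is ≤-well-ordered, equipped with twisted convolution, is a ring containing RG; moreover if R is a skew-field then F_≤(RG) is a skew-field. -/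
noncomputable section

open scoped Classical

/-- The Malcev–Neumann set: functions `G → R` whose support is well-ordered with respect to
the (bi)ordering of `G`. -/
def MNset (R G : Type*) [Ring R] [LinearOrder G] : Set (G → R) :=
  {x : G → R | {g : G | x g ≠ 0}.IsWF}

/-- The twisted convolution product. -/
def mulMN {R G : Type*} [Ring R] [Group G] (ν : G → R ≃+* R) (μ : G → G → Rˣ)
    (x y : G → R) : G → R :=
  fun g => ∑ᶠ a : G, x a * ν a (y (a⁻¹ * g)) * (μ a (a⁻¹ * g) : R)

/-- The multiplicative unit. -/
def oneMN {R G : Type*} [Ring R] [Group G] : G → R :=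
  fun g => if g = 1 then 1 else 0

/-!
Because `≤` is invariant under multiplication on both sides, two partially well-ordered subsets
`s, t ⊆ G` have a partially well-ordered product `s * t`, and each `g` factors as `g = a * b`
with `a ∈ s`, `b ∈ t` in only finitely many ways; so twisted convolution is a finite sum at
every point and the usual Hahn-series arguments give a ring.

For inverses, multiplying a nonzero `x` on the left by the monomial inverse to its least term
gives `w = 1 - y` with `support y > 1`. By Higman's lemma the submonoid generated by
`support y` is well-ordered, and well-founded induction shows that each `g` lies in the support
of only finitely many powers `yⁿ`; hence `∑ yⁿ` is a well-defined left inverse of `1 - y`.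
Since every nonzero element then has a left inverse, left inverses are two-sided.
-/

open Function Set
open scoped Pointwise

theorem exists_ne_zero_of_finsum_ne_zero {α M : Type*} [AddCommMonoid M] {f : α → M}
    (h : ∑ᶠ a, f a ≠ 0) : ∃ a, f a ≠ 0 := by
  by_contra! hf
  exact h (finsum_eq_zero_of_forall_eq_zero hf)

theorem finsum_nat_eq_zero_add {M : Type*} [AddCommMonoid M] {f : ℕ → M}
    (hf : (support f).Finite) : ∑ᶠ n, f n = f 0 + ∑ᶠ n, f (n + 1) := by
  obtain ⟨N, hN⟩ := hf.bddAbove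
  have hsupp : support f ⊆ Finset.range (N + 1) := fun n hn =>
    Finset.mem_range.2 (Nat.lt_succ_of_le (hN hn))
  have hsupp' : support (fun n => f (n + 1)) ⊆ Finset.range N := fun n hn =>
    Finset.mem_range.2 (Nat.lt_of_succ_le (hN hn))
  rw [finsum_eq_sum_of_support_subset _ hsupp, finsum_eq_sum_of_support_subset _ hsupp',
    Finset.sum_range_succ', add_comm]

section BiorderedMonoid

variable {G : Type*} {s t : Set G}

theorem Set.IsPWO.mul' [Mul G] [Preorder G] [MulLeftMono G] [MulRightMono G]
    (hs : s.IsPWO) (ht : t.IsPWO) : (s * t).IsPWO := by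
  rw [← image_mul_prod]
  exact (hs.prod ht).image_of_monotone (monotone_fst.mul' monotone_snd)

theorem Set.IsPWO.submonoid_closure' [Monoid G] [Preorder G] [MulLeftMono G] [MulRightMono G]
    (hpos : ∀ x ∈ s, 1 ≤ x) (hs : s.IsPWO) : (Submonoid.closure s : Set G).IsPWO := by
  rw [Submonoid.closure_eq_image_prod]
  refine (hs.partiallyWellOrderedOn_sublistForall₂ (· ≤ ·)).image_of_monotone_on ?_
  exact fun l₁ _ l₂ hl₂ h => h.prod_le_prod' fun x hx => hpos x (hl₂ x hx)

theorem Set.MulAntidiagonal.finite_of_isPWO' [Group G] [PartialOrder G] [MulLeftMono G]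
    [MulRightMono G] (hs : s.IsPWO) (ht : t.IsPWO) (g : G) :
    (mulAntidiagonal s t g).Finite := by
  by_contra h
  let f := Infinite.natEmbedding _ h
  obtain ⟨m, n, hmn, hle⟩ := (hs.prod ht).exists_lt fun k => ⟨(f k).2.1, (f k).2.2.1⟩
  have hprod : (f m : G × G).1 * (f m : G × G).2 = (f n : G × G).1 * (f n : G × G).2 :=
    (f m).2.2.2.trans (f n).2.2.2.symm
  obtain ⟨h₁, h₂⟩ := (mul_eq_mul_iff_eq_and_eq hle.1 hle.2).1 hprod
  exact hmn.ne (f.injective (Subtype.ext (Prod.ext h₁ h₂)))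

end BiorderedMonoid

section TwistedConvolution

variable {R G : Type*} [Ring R] [Group G] {ν : G → R ≃+* R} {μ : G → G → Rˣ}

theorem mulMN_apply_eq_sum {x y : G → R} {s t : Set G} {g : G} (hx : support x ⊆ s)
    (hy : support y ⊆ t) (hfin : (mulAntidiagonal s t g).Finite) :
    mulMN ν μ x y g = ∑ p ∈ hfin.toFinset, x p.1 * ν p.1 (y p.2) * (μ p.1 p.2 : R) := by
  have hsupp : support (fun a => x a * ν a (y (a⁻¹ * g)) * (μ a (a⁻¹ * g) : R)) ⊆
      hfin.toFinset.image Prod.fst := by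
    intro a ha
    have hxa : x a ≠ 0 := fun h => ha (by simp [h])
    have hya : y (a⁻¹ * g) ≠ 0 := fun h => ha (by simp [h])
    exact Finset.mem_image.2 ⟨(a, a⁻¹ * g), by simpa using ⟨hx hxa, hy hya⟩, rfl⟩
  have hfst : InjOn Prod.fst (hfin.toFinset : Set (G × G)) := fun p hp q hq h => by
    simp only [Finite.coe_toFinset, mem_mulAntidiagonal] at hp hq
    exact Prod.ext h (mul_left_cancel (h ▸ hp.2.2.trans hq.2.2.symm))
  rw [mulMN, finsum_eq_sum_of_support_subset _ hsupp, Finset.sum_image hfst]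
  refine Finset.sum_congr rfl fun p hp => ?_
  obtain ⟨-, -, hpg⟩ := hfin.mem_toFinset.1 hp
  rw [← hpg, inv_mul_cancel_left]

theorem support_mulMN_subset (x y : G → R) :
    support (mulMN ν μ x y) ⊆ support x * support y := by
  intro g hg
  obtain ⟨a, ha⟩ := exists_ne_zero_of_finsum_ne_zero hg
  exact ⟨a, fun h => ha (by simp [h]), a⁻¹ * g, fun h => ha (by simp [h]),
    mul_inv_cancel_left a g⟩

theorem oneMN_ne_zero [Nontrivial R] : (oneMN : G → R) ≠ 0 := fun h =>
  one_ne_zero (α := R) (by simpa [oneMN] using congrFun h 1)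

theorem zero_mulMN (y : G → R) : mulMN ν μ 0 y = 0 := by
  ext g
  simp [mulMN]

theorem oneMN_mulMN (hν1 : ν 1 = RingEquiv.refl R) (hμ1 : ∀ g, μ 1 g = 1) (x : G → R) :
    mulMN ν μ oneMN x = x := by
  ext g
  rw [mulMN, finsum_eq_single _ 1 fun a ha => by simp [oneMN, ha]]
  simp [oneMN, hν1, hμ1]

theorem mulMN_oneMN (hμ1 : ∀ g, μ g 1 = 1) (x : G → R) : mulMN ν μ x oneMN = x := by
  ext g
  rw [mulMN, finsum_eq_single _ g fun a ha => by simp [oneMN, inv_mul_eq_one, ha]]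
  simp [oneMN, hμ1]

theorem single_mulMN [DecidableEq G] (a : G) (r : R) (x : G → R) (g : G) :
    mulMN ν μ (Pi.single a r) x g = r * ν a (x (a⁻¹ * g)) * (μ a (a⁻¹ * g) : R) := by
  rw [mulMN, finsum_eq_single _ a fun b hb => by simp [hb]]
  simp

theorem mul_assoc_monomial
    (hν : ∀ g g' : G, ∀ r : R,
      ν g (ν g' r) = (μ g g' : R) * ν (g * g') r * ((μ g g')⁻¹ : Rˣ))
    (hμ : ∀ g g' g'' : G,
      (μ g g' : R) * (μ (g * g') g'' : R) = ν g (μ g' g'') * (μ g (g' * g'') : R))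
    (a b c : G) (r s t : R) :
    r * ν a s * (μ a b : R) * ν (a * b) t * (μ (a * b) c : R) =
      r * ν a (s * ν b t * (μ b c : R)) * (μ a (b * c) : R) := by
  have hcocycle : (((μ a b)⁻¹ : Rˣ) : R) * (ν a (μ b c) * μ a (b * c)) = μ (a * b) c := by
    rw [← hμ, Units.inv_mul_cancel_left]
  rw [map_mul, map_mul, hν, ← hcocycle]
  simp only [mul_assoc]

def powMN (ν : G → R ≃+* R) (μ : G → G → Rˣ) (y : G → R) : ℕ → G → R
  | 0 => oneMN
  | n + 1 => mulMN ν μ (powMN ν μ y n) y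

theorem support_powMN_subset (y : G → R) :
    ∀ n, support (powMN ν μ y n) ⊆ Submonoid.closure (support y)
  | 0 => fun g hg => by
    obtain rfl : g = 1 := by_contra fun h => hg (if_neg h)
    exact one_mem _
  | n + 1 => (support_mulMN_subset _ _).trans <| mul_subset_iff.2 fun _ ha _ hb =>
    mul_mem (support_powMN_subset y n ha) (Submonoid.subset_closure hb)

def geomMN (ν : G → R ≃+* R) (μ : G → G → Rˣ) (y : G → R) : G → R :=
  fun g => ∑ᶠ n, powMN ν μ y n g

theorem support_geomMN_subset (y : G → R) :
    support (geomMN ν μ y) ⊆ ⋃ n, support (powMN ν μ y n) := fun _ hg =>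
  mem_iUnion.2 (exists_ne_zero_of_finsum_ne_zero hg)

end TwistedConvolution

namespace MNset

variable {R G : Type*} [Ring R] [LinearOrder G] {x y : G → R}

theorem isPWO_support (hx : x ∈ MNset R G) : (support x).IsPWO := IsWF.isPWO hx

theorem of_finite_support (hx : (support x).Finite) : x ∈ MNset R G := hx.isWF

theorem zero_mem : (0 : G → R) ∈ MNset R G := of_finite_support (by simp)

theorem add_mem (hx : x ∈ MNset R G) (hy : y ∈ MNset R G) : x + y ∈ MNset R G :=
  (IsWF.union hx hy).mono (support_add x y)

theorem neg_mem (hx : x ∈ MNset R G) : -x ∈ MNset R G := by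
  show (support (-x)).IsWF
  rwa [support_neg]

theorem sub_mem (hx : x ∈ MNset R G) (hy : y ∈ MNset R G) : x - y ∈ MNset R G :=
  sub_eq_add_neg x y ▸ add_mem hx (neg_mem hy)

theorem single_mem (g : G) (r : R) : Pi.single g r ∈ MNset R G :=
  of_finite_support ((finite_singleton g).subset (Pi.support_single_subset))

theorem oneMN_mem [Group G] : oneMN ∈ MNset R G := by
  convert single_mem (1 : G) (1 : R)
  ext g
  simp [oneMN, Pi.single_apply]

variable [Group G] [MulLeftMono G] [MulRightMono G] {ν : G → R ≃+* R} {μ : G → G → Rˣ}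

theorem mulMN_mem (hx : x ∈ MNset R G) (hy : y ∈ MNset R G) : mulMN ν μ x y ∈ MNset R G :=
  ((isPWO_support hx).mul' (isPWO_support hy)).isWF.mono (support_mulMN_subset x y)

end MNset

section MalcevNeumannRing

open MNset

variable {R G : Type*} [Ring R] [Group G] [LinearOrder G] [MulLeftMono G] [MulRightMono G]
  {ν : G → R ≃+* R} {μ : G → G → Rˣ} {x y z : G → R}

theorem mulMN_add (hx : x ∈ MNset R G) (hy : y ∈ MNset R G) (hz : z ∈ MNset R G) :
    mulMN ν μ x (y + z) = mulMN ν μ x y + mulMN ν μ x z := by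
  ext g
  have hfin := MulAntidiagonal.finite_of_isPWO' (isPWO_support hx)
    ((isPWO_support hy).union (isPWO_support hz)) g
  rw [Pi.add_apply, mulMN_apply_eq_sum (y := y + z) subset_rfl (support_add y z) hfin,
    mulMN_apply_eq_sum subset_rfl subset_union_left hfin,
    mulMN_apply_eq_sum subset_rfl subset_union_right hfin, ← Finset.sum_add_distrib]
  simp only [Pi.add_apply, map_add, mul_add, add_mul]

theorem add_mulMN (hx : x ∈ MNset R G) (hy : y ∈ MNset R G) (hz : z ∈ MNset R G) :
    mulMN ν μ (x + y) z = mulMN ν μ x z + mulMN ν μ y z := by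
  ext g
  have hfin := MulAntidiagonal.finite_of_isPWO'
    ((isPWO_support hx).union (isPWO_support hy)) (isPWO_support hz) g
  rw [Pi.add_apply, mulMN_apply_eq_sum (x := x + y) (support_add x y) subset_rfl hfin,
    mulMN_apply_eq_sum subset_union_left subset_rfl hfin,
    mulMN_apply_eq_sum subset_union_right subset_rfl hfin, ← Finset.sum_add_distrib]
  simp only [Pi.add_apply, add_mul]

theorem mulMN_sub (hx : x ∈ MNset R G) (hy : y ∈ MNset R G) (hz : z ∈ MNset R G) :
    mulMN ν μ x (y - z) = mulMN ν μ x y - mulMN ν μ x z := by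
  rw [eq_sub_iff_add_eq, ← mulMN_add hx (sub_mem hy hz) hz, sub_add_cancel]

theorem mulMN_assoc
    (hν : ∀ g g' : G, ∀ r : R,
      ν g (ν g' r) = (μ g g' : R) * ν (g * g') r * ((μ g g')⁻¹ : Rˣ))
    (hμ : ∀ g g' g'' : G,
      (μ g g' : R) * (μ (g * g') g'' : R) = ν g (μ g' g'') * (μ g (g' * g'') : R))
    (hx : x ∈ MNset R G) (hy : y ∈ MNset R G) (hz : z ∈ MNset R G) :
    mulMN ν μ (mulMN ν μ x y) z = mulMN ν μ x (mulMN ν μ y z) := by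
  ext g
  have hx' := isPWO_support hx
  have hy' := isPWO_support hy
  have hz' := isPWO_support hz
  have hxy (p : G) := mulMN_apply_eq_sum (ν := ν) (μ := μ) subset_rfl subset_rfl
    (MulAntidiagonal.finite_of_isPWO' hx' hy' p)
  have hyz (p : G) := mulMN_apply_eq_sum (ν := ν) (μ := μ) subset_rfl subset_rfl
    (MulAntidiagonal.finite_of_isPWO' hy' hz' p)
  rw [mulMN_apply_eq_sum (support_mulMN_subset x y) subset_rfl
      (MulAntidiagonal.finite_of_isPWO' (hx'.mul' hy') hz' g),
    mulMN_apply_eq_sum subset_rfl (support_mulMN_subset y z)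
      (MulAntidiagonal.finite_of_isPWO' hx' (hy'.mul' hz') g)]
  simp only [hxy, hyz, Finset.sum_mul, Finset.mul_sum, map_sum, Finset.sum_sigma']
  refine Finset.sum_nbij' (fun ⟨⟨_, c⟩, ⟨a, b⟩⟩ => ⟨(a, b * c), (b, c)⟩)
    (fun ⟨⟨a, _⟩, ⟨b, c⟩⟩ => ⟨(a * b, c), (a, b)⟩) ?_ ?_ ?_ ?_ ?_
  all_goals
    rintro ⟨⟨_, _⟩, ⟨_, _⟩⟩ h
    simp only [Finset.mem_sigma, Finite.mem_toFinset, mem_mulAntidiagonal, and_true] at h ⊢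
  · obtain ⟨⟨-, hc, hg⟩, ha, hb, rfl⟩ := h
    exact ⟨⟨ha, mul_mem_mul hb hc, (mul_assoc _ _ _).symm.trans hg⟩, hb, hc⟩
  · obtain ⟨⟨ha, -, hg⟩, hb, hc, rfl⟩ := h
    exact ⟨⟨mul_mem_mul ha hb, hc, (mul_assoc _ _ _).trans hg⟩, ha, hb⟩
  · rw [h.2.2.2]
  · rw [h.2.2.2]
  · rw [← h.2.2.2]
    exact mul_assoc_monomial hν hμ _ _ _ _ _ _

theorem isPWO_iUnion_support_powMN (hy : y ∈ MNset R G) (hpos : ∀ g ∈ support y, 1 ≤ g) :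
    (⋃ n, support (powMN ν μ y n)).IsPWO :=
  ((isPWO_support hy).submonoid_closure' hpos).mono (iUnion_subset (support_powMN_subset y))

theorem finite_setOf_powMN_apply_ne_zero (hy : y ∈ MNset R G)
    (hpos : ∀ g ∈ support y, 1 < g) (g : G) : {n | powMN ν μ y n g ≠ 0}.Finite := by
  have hU := isPWO_iUnion_support_powMN (ν := ν) (μ := μ) hy fun g hg => (hpos g hg).le
  by_cases hg : g ∈ ⋃ n, support (powMN ν μ y n)
  swap
  · exact finite_empty.subset fun n hn => hg (mem_iUnion.2 ⟨n, hn⟩)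
  refine hU.isWF.induction (P := fun g => {n | powMN ν μ y n g ≠ 0}.Finite) hg
    fun g _ ih => ?_
  have hfin := MulAntidiagonal.finite_of_isPWO' hU (isPWO_support hy) g
  have hlt : ∀ p ∈ mulAntidiagonal (⋃ n, support (powMN ν μ y n)) (support y) g, p.1 < g :=
    fun p ⟨_, ha, hp⟩ => hp ▸ lt_mul_of_one_lt_right' p.1 (hpos _ ha)
  refine ((finite_singleton 0).union ((hfin.biUnion fun p hp =>
    ih p.1 hp.1 (hlt p hp)).image Nat.succ)).subset ?_
  rintro (_ | n) hn
  · exact Or.inl rfl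
  · obtain ⟨b, hb, a, ha, hab⟩ := support_mulMN_subset _ _ hn
    exact Or.inr ⟨n, mem_biUnion (x := (b, a)) ⟨mem_iUnion.2 ⟨n, hb⟩, ha, hab⟩ hb, rfl⟩

theorem geomMN_mem (hy : y ∈ MNset R G) (hpos : ∀ g ∈ support y, 1 ≤ g) :
    geomMN ν μ y ∈ MNset R G :=
  (isPWO_iUnion_support_powMN hy hpos).isWF.mono (support_geomMN_subset y)

theorem geomMN_mulMN (hy : y ∈ MNset R G) (hpos : ∀ g ∈ support y, 1 < g) :
    mulMN ν μ (geomMN ν μ y) y = geomMN ν μ y - oneMN := by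
  ext g
  have hfin := MulAntidiagonal.finite_of_isPWO'
    (isPWO_iUnion_support_powMN (ν := ν) (μ := μ) hy fun g hg => (hpos g hg).le)
    (isPWO_support hy) g
  have hpow := finite_setOf_powMN_apply_ne_zero (ν := ν) (μ := μ) hy hpos
  calc mulMN ν μ (geomMN ν μ y) y g
      = ∑ p ∈ hfin.toFinset, ∑ᶠ n,
          powMN ν μ y n p.1 * ν p.1 (y p.2) * (μ p.1 p.2 : R) := by
        rw [mulMN_apply_eq_sum (support_geomMN_subset y) subset_rfl hfin]
        refine Finset.sum_congr rfl fun p _ => ?_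
        rw [geomMN, mul_assoc, finsum_mul' _ _ (hpow p.1)]
        simp only [mul_assoc]
    _ = ∑ᶠ n, mulMN ν μ (powMN ν μ y n) y g := by
        rw [sum_finsum_comm]
        · congr 1
          ext n
          rw [mulMN_apply_eq_sum (subset_iUnion (fun n => support (powMN ν μ y n)) n) subset_rfl
            hfin]
        · exact fun p _ => (hpow p.1).subset fun n hn h => hn (by simp [h])
    _ = (geomMN ν μ y - oneMN : G → R) g := by
        rw [Pi.sub_apply, geomMN, finsum_nat_eq_zero_add (hpow g)]
        exact (add_sub_cancel_left (oneMN g) _).symm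

theorem exists_mulMN_eq_oneMN_of_one_le (hμ1 : ∀ g, μ g 1 = 1) {w : G → R}
    (hw : w ∈ MNset R G) (hw1 : w 1 = 1) (hpos : ∀ g ∈ support w, 1 ≤ g) :
    ∃ v ∈ MNset R G, mulMN ν μ v w = oneMN := by
  set y := oneMN - w with hy_def
  have hy : y ∈ MNset R G := sub_mem oneMN_mem hw
  have hypos : ∀ g ∈ support y, 1 < g := by
    intro g hg
    have hg1 : g ≠ 1 := by
      rintro rfl
      simp [y, oneMN, hw1] at hg
    have hwg : g ∈ support w := by simpa [y, oneMN, hg1] using hg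
    exact (hpos g hwg).lt_of_ne (Ne.symm hg1)
  have hv := geomMN_mem (ν := ν) (μ := μ) hy fun g hg => (hypos g hg).le
  refine ⟨geomMN ν μ y, hv, ?_⟩
  rw [← sub_sub_cancel oneMN w, ← hy_def, mulMN_sub hv oneMN_mem hy, mulMN_oneMN hμ1,
    geomMN_mulMN hy hypos, sub_sub_cancel]

end MalcevNeumannRing

section MalcevNeumannDivisionRing

open MNset

variable {R G : Type*} [DivisionRing R] [Group G] [LinearOrder G] [MulLeftMono G]
  [MulRightMono G] {ν : G → R ≃+* R} {μ : G → G → Rˣ} {x : G → R}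

theorem exists_mulMN_eq_oneMN_of_ne_zero
    (hν : ∀ g g' : G, ∀ r : R,
      ν g (ν g' r) = (μ g g' : R) * ν (g * g') r * ((μ g g')⁻¹ : Rˣ))
    (hμ : ∀ g g' g'' : G,
      (μ g g' : R) * (μ (g * g') g'' : R) = ν g (μ g' g'') * (μ g (g' * g'') : R))
    (hμ1 : ∀ g, μ g 1 = 1) (hx : x ∈ MNset R G) (hx0 : x ≠ 0) :
    ∃ v ∈ MNset R G, mulMN ν μ v x = oneMN := by
  have hxWF : (support x).IsWF := hx
  have hsupp : (support x).Nonempty := support_nonempty_iff.2 hx0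
  set g₀ := hxWF.min hsupp
  set c := (ν g₀⁻¹ (x g₀) * (μ g₀⁻¹ g₀ : R))⁻¹
  set w := mulMN ν μ (Pi.single g₀⁻¹ c) x
  have hw (g : G) : w g = c * ν g₀⁻¹ (x (g₀ * g)) * (μ g₀⁻¹ (g₀ * g) : R) := by
    simp only [w, single_mulMN, inv_inv]
  have hw1 : w 1 = 1 := by
    rw [hw, mul_one, mul_assoc]
    exact inv_mul_cancel₀ (mul_ne_zero ((map_ne_zero _).2 (hxWF.min_mem hsupp)) (Units.ne_zero _))
  have hwpos : ∀ g ∈ support w, 1 ≤ g := fun g hg =>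
    (le_mul_iff_one_le_right' g₀).1 (hxWF.min_le hsupp fun h => hg (by simp [hw, h]))
  obtain ⟨v, hv, hvw⟩ :=
    exists_mulMN_eq_oneMN_of_one_le hμ1 (mulMN_mem (single_mem g₀⁻¹ c) hx) hw1 hwpos
  exact ⟨mulMN ν μ v (Pi.single g₀⁻¹ c), mulMN_mem hv (single_mem _ _),
    by rw [mulMN_assoc hν hμ hv (single_mem _ _) hx, hvw]⟩

theorem exists_mulMN_inverse
    (hν : ∀ g g' : G, ∀ r : R,
      ν g (ν g' r) = (μ g g' : R) * ν (g * g') r * ((μ g g')⁻¹ : Rˣ))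
    (hμ : ∀ g g' g'' : G,
      (μ g g' : R) * (μ (g * g') g'' : R) = ν g (μ g' g'') * (μ g (g' * g'') : R))
    (hν1 : ν 1 = RingEquiv.refl R) (hμ1l : ∀ g, μ 1 g = 1) (hμ1r : ∀ g, μ g 1 = 1)
    (hx : x ∈ MNset R G) (hx0 : x ≠ 0) :
    ∃ y ∈ MNset R G, mulMN ν μ x y = oneMN ∧ mulMN ν μ y x = oneMN := by
  obtain ⟨y, hy, hyx⟩ := exists_mulMN_eq_oneMN_of_ne_zero hν hμ hμ1r hx hx0
  have hy0 : y ≠ 0 := by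
    rintro rfl
    exact oneMN_ne_zero (hyx ▸ zero_mulMN x)
  obtain ⟨z, hz, hzy⟩ := exists_mulMN_eq_oneMN_of_ne_zero hν hμ hμ1r hy hy0
  have hzx : z = x := calc
    z = mulMN ν μ z (mulMN ν μ y x) := by rw [hyx, mulMN_oneMN hμ1r]
    _ = x := by rw [← mulMN_assoc hν hμ hz hy hx, hzy, oneMN_mulMN hν1 hμ1l]
  exact ⟨y, hy, hzx ▸ hzy, hyx⟩

end MalcevNeumannDivisionRing

/-- **Malcev–Neumann.** Let `G` be a group with a biordering `≤` and let `RG`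
be a twisted group ring over a skew-field `R`.  Then the set `F_≤(RG)` of functions
`x : G → R` with `≤`-well-ordered support, equipped with the twisted convolution, is a ring
containing `RG` (closed under addition, negation and multiplication, containing all
finitely supported functions, with associative unital multiplication distributing over
addition); moreover, since `R` is a skew-field, `F_≤(RG)` is a skew-field: every nonzero
element has a two-sided inverse in `F_≤(RG)`. -/
theorem stmt_9 {R G : Type*} [DivisionRing R] [Group G] [LinearOrder G]
    (hbo₁ : ∀ a b c : G, a ≤ b → a * c ≤ b * c)
    (hbo₂ : ∀ a b c : G, a ≤ b → c * a ≤ c * b)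
    (ν : G → R ≃+* R) (μ : G → G → Rˣ)
    (hν : ∀ g g' : G, ∀ r : R,
      ν g (ν g' r) = (μ g g' : R) * ν (g * g') r * ((μ g g')⁻¹ : Rˣ))
    (hμ : ∀ g g' g'' : G,
      (μ g g' : R) * (μ (g * g') g'' : R) = ν g (μ g' g'') * (μ g (g' * g'') : R))
    (hν1 : ν 1 = RingEquiv.refl R) (hμ1 : ∀ g : G, μ 1 g = 1 ∧ μ g 1 = 1) :
    (∀ x ∈ MNset R G, ∀ y ∈ MNset R G, x + y ∈ MNset R G) ∧
    (∀ x ∈ MNset R G, -x ∈ MNset R G) ∧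
    ((0 : G → R) ∈ MNset R G ∧ oneMN (R := R) (G := G) ∈ MNset R G) ∧
    (∀ x : G → R, {g : G | x g ≠ 0}.Finite → x ∈ MNset R G) ∧
    (∀ x ∈ MNset R G, ∀ y ∈ MNset R G, mulMN ν μ x y ∈ MNset R G) ∧
    (∀ x ∈ MNset R G, mulMN ν μ oneMN x = x ∧ mulMN ν μ x oneMN = x) ∧
    (∀ x ∈ MNset R G, ∀ y ∈ MNset R G, ∀ z ∈ MNset R G,
      mulMN ν μ (mulMN ν μ x y) z = mulMN ν μ x (mulMN ν μ y z)) ∧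
    (∀ x ∈ MNset R G, ∀ y ∈ MNset R G, ∀ z ∈ MNset R G,
      mulMN ν μ x (y + z) = mulMN ν μ x y + mulMN ν μ x z ∧
      mulMN ν μ (x + y) z = mulMN ν μ x z + mulMN ν μ y z) ∧
    (∀ x ∈ MNset R G, x ≠ 0 →
      ∃ y ∈ MNset R G, mulMN ν μ x y = oneMN ∧ mulMN ν μ y x = oneMN) := by
  have : MulLeftMono G := ⟨fun c _ _ h => hbo₂ _ _ c h⟩
  have : MulRightMono G := ⟨fun c _ _ h => hbo₁ _ _ c h⟩
  have hμ1l g := (hμ1 g).1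
  have hμ1r g := (hμ1 g).2
  exact ⟨fun _ hx _ hy => MNset.add_mem hx hy, fun _ hx => MNset.neg_mem hx,
    ⟨MNset.zero_mem, MNset.oneMN_mem⟩, fun _ hx => MNset.of_finite_support hx,
    fun _ hx _ hy => MNset.mulMN_mem hx hy,
    fun x _ => ⟨oneMN_mulMN hν1 hμ1l x, mulMN_oneMN hμ1r x⟩,
    fun _ hx _ hy _ hz => mulMN_assoc hν hμ hx hy hz,
    fun _ hx _ hy _ hz => ⟨mulMN_add hx hy hz, add_mulMN hx hy hz⟩,
    fun _ hx hx0 => exists_mulMN_inverse hν hμ hν1 hμ1l hμ1r hx hx0⟩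
end
end

section
/- Let Q be a finite group, ψ a real character on a group H that is normal in G with G/H = Q, s : Q → G a section with s(1)=1, and equip D(H)Q with the induced twisted group ring structure. Define the Q-value qval_ψ(x) = min_{p,q∈Q} { ψ^p(x_q) + (1/|Q|)·ψ(s(q)^{|Q|}) } for x = Σ x_q q. Then for x, y ∈ D(H) and q ∈ Q: (a) qval_ψ(s(q)·x·s(q)⁻¹) = qval_ψ(x); (b) qval_ψ(x·q) = qval_ψ(q·x) = qval_ψ(q) + qval_ψ(x); (c) qval_ψ(xy) ≥ qval_ψ(x) + qval_ψ(y). -/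
noncomputable section

open scoped Classical

variable {G Q D : Type*} [Group G] [Group Q] [Fintype Q] [DivisionRing D]

/-- The weight `(1/|Q|) ψ (s q ^ |Q|)` appearing in the definition of the `Q`-value;
note `s q ^ |Q| ∈ H = ker π`. -/
def qwt (π : G →* Q) (s : Q → G) (hs : ∀ q, π (s q) = q)
    (ι : ↥π.ker →* Dˣ) (ψ : D → EReal) (q : Q) : EReal :=
  (((Fintype.card Q : ℝ)⁻¹ : ℝ) : EReal) *
    ψ (ι ⟨s q ^ Fintype.card Q, by
      rw [MonoidHom.mem_ker, map_pow, hs, pow_card_eq_one]⟩)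

/-- The `Q`-value `qval ψ x = min_{p,q} { ψ^p (x_q) + (1/|Q|) ψ (s q ^ |Q|) }` of an
element `x = Σ x_q q` of the twisted group ring `D(H) Q`, where `ψ^p = ψ ∘ c (s p)`. -/
def qval (π : G →* Q) (s : Q → G) (hs : ∀ q, π (s q) = q)
    (c : G →* D ≃+* D) (ι : ↥π.ker →* Dˣ) (ψ : D → EReal) (x : Q → D) : EReal :=
  ⨅ p : Q, ⨅ q : Q, (ψ (c (s p) (x q)) + qwt π s hs ι ψ q)

/-- The element of `D(H) Q` supported at `q ∈ Q` with coefficient `d ∈ D(H)`. -/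
def qdelta (Q : Type*) [Group Q] (q : Q) (d : D) : Q → D :=
  fun p => if p = q then d else 0

/-! The character `ψ` is multiplicative on `D ∖ {0}` and infinite at `0`, so it is superadditive
on products and invariant under conjugation by units. Conjugation by an element of `H` is inner
on `D(H)`, so each twisted character `ψ^p = ψ ∘ c (s p)` depends only on the coset of `s p`.
Hence `ψ^p ∘ c (s q) = ψ^(pq)`: conjugation by `s q` permutes the family `(ψ^p)_p` and leaves its
minimum unchanged. On a monomial `d q` the `Q`-value is this minimum at `d` plus the weight of `q`,
and the weight of `1` is `0` because `s 1 = 1`. -/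

theorem Monotone.map_iInf_of_finite {α β ι : Type*} [CompleteLinearOrder α] [CompleteLattice β]
    [Nonempty ι] [Finite ι] {f : α → β} (hf : Monotone f) (g : ι → α) :
    f (⨅ i, g i) = ⨅ i, f (g i) := by
  obtain ⟨i, hi⟩ := exists_eq_ciInf_of_finite (f := g)
  exact le_antisymm (hf.map_iInf_le) (hi ▸ iInf_le _ i)

section Character

variable {ψ : D → EReal}

theorem psi_one_eq_zero (hψreal : ∀ x : D, x ≠ 0 → ψ x ≠ ⊤ ∧ ψ x ≠ ⊥)
    (hψmul : ∀ x y : D, x ≠ 0 → y ≠ 0 → ψ (x * y) = ψ x + ψ y) : ψ 1 = 0 := by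
  obtain ⟨hne_top, hne_bot⟩ := hψreal 1 one_ne_zero
  have hidem := hψmul 1 1 one_ne_zero one_ne_zero
  rw [one_mul] at hidem
  lift ψ 1 to ℝ using ⟨hne_top, hne_bot⟩ with r
  have : r = r + r := by exact_mod_cast hidem
  exact_mod_cast (by linarith : r = 0)

theorem add_le_psi_mul (hψ0 : ψ 0 = ⊤)
    (hψmul : ∀ x y : D, x ≠ 0 → y ≠ 0 → ψ (x * y) = ψ x + ψ y) (x y : D) :
    ψ x + ψ y ≤ ψ (x * y) := by
  rcases eq_or_ne x 0 with rfl | hx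
  · simp [hψ0]
  rcases eq_or_ne y 0 with rfl | hy
  · simp [hψ0]
  exact (hψmul x y hx hy).ge

theorem psi_units_conj (hψ1 : ψ 1 = 0)
    (hψmul : ∀ x y : D, x ≠ 0 → y ≠ 0 → ψ (x * y) = ψ x + ψ y) (u : Dˣ) (y : D) :
    ψ (u * y * ↑u⁻¹) = ψ y := by
  rcases eq_or_ne y 0 with rfl | hy
  · simp
  calc ψ (u * y * ↑u⁻¹) = ψ y + (ψ u + ψ ↑u⁻¹) := by
        rw [hψmul _ _ (mul_ne_zero u.ne_zero hy) u⁻¹.ne_zero, hψmul _ _ u.ne_zero hy]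
        ac_rfl
    _ = ψ y := by
        rw [← hψmul _ _ u.ne_zero u⁻¹.ne_zero, Units.mul_inv, hψ1, add_zero]

end Character

section Conjugation

variable {K : Type*} [Group K] {π : G →* K} {c : G →* D ≃+* D} {ι : ↥π.ker →* Dˣ} {ψ : D → EReal}

theorem psi_conj_eq_of_map_eq (hψ1 : ψ 1 = 0)
    (hψmul : ∀ x y : D, x ≠ 0 → y ≠ 0 → ψ (x * y) = ψ x + ψ y)
    (hinner : ∀ (h : ↥π.ker) (x : D), c (h : G) x = (ι h : D) * x * ((ι h)⁻¹ : Dˣ))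
    {g g' : G} (hg : π g = π g') (d : D) : ψ (c g d) = ψ (c g' d) := by
  have hk : g * g'⁻¹ ∈ π.ker := by rw [MonoidHom.mem_ker, map_mul, map_inv, hg, mul_inv_cancel]
  have hcomp : c g d = c (g * g'⁻¹) (c g' d) := by
    rw [← RingAut.mul_apply, ← map_mul, inv_mul_cancel_right]
  rw [hcomp, hinner ⟨_, hk⟩, psi_units_conj hψ1 hψmul]

theorem iInf_psi_conj_section_conj {s : K → G} (hs : ∀ q, π (s q) = q) (hψ1 : ψ 1 = 0)
    (hψmul : ∀ x y : D, x ≠ 0 → y ≠ 0 → ψ (x * y) = ψ x + ψ y)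
    (hinner : ∀ (h : ↥π.ker) (x : D), c (h : G) x = (ι h : D) * x * ((ι h)⁻¹ : Dˣ))
    (q : K) (d : D) : ⨅ p, ψ (c (s p) (c (s q) d)) = ⨅ p, ψ (c (s p) d) := by
  have hcoset (p : K) : ψ (c (s p) (c (s q) d)) = ψ (c (s (p * q)) d) := by
    rw [← RingAut.mul_apply, ← map_mul]
    exact psi_conj_eq_of_map_eq hψ1 hψmul hinner (by simp [hs]) d
  simp_rw [hcoset]
  exact (Equiv.mulRight q).iInf_congr fun _ => rfl

end Conjugation

section QValue

variable {π : G →* Q} {s : Q → G} (hs : ∀ q, π (s q) = q) {c : G →* D ≃+* D}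
  {ι : ↥π.ker →* Dˣ} {ψ : D → EReal}

theorem qwt_ne_bot (hψ : ∀ u : Dˣ, ψ u ≠ ⊥) (q : Q) : qwt π s hs ι ψ q ≠ ⊥ := by
  have hcard : (0 : EReal) ≤ (((Fintype.card Q : ℝ)⁻¹ : ℝ) : EReal) := by positivity
  exact (EReal.mul_ne_bot _ _).2
    ⟨.inl (EReal.coe_ne_bot _), .inr (hψ _), .inl (EReal.coe_ne_top _), .inl hcard⟩

theorem qwt_one (hs1 : s 1 = 1) (hψ1 : ψ 1 = 0) : qwt π s hs ι ψ 1 = 0 := by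
  have hone : (⟨s 1 ^ Fintype.card Q, by
      rw [MonoidHom.mem_ker, map_pow, hs, pow_card_eq_one]⟩ : π.ker) = 1 := by
    ext; simp [hs1]
  rw [qwt, hone, map_one, Units.val_one, hψ1, mul_zero]

theorem qval_qdelta (hψ0 : ψ 0 = ⊤) (hwt : ∀ q, qwt π s hs ι ψ q ≠ ⊥) (q : Q) (d : D) :
    qval π s hs c ι ψ (qdelta Q q d) = (⨅ p, ψ (c (s p) d)) + qwt π s hs ι ψ q := by
  have hrow (p : Q) : ⨅ q', ψ (c (s p) (qdelta Q q d q')) + qwt π s hs ι ψ q'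
      = ψ (c (s p) d) + qwt π s hs ι ψ q := by
    refine le_antisymm ((iInf_le _ q).trans_eq (by simp [qdelta])) (le_iInf fun q' => ?_)
    rcases eq_or_ne q' q with rfl | hq'
    · simp [qdelta]
    · simp [qdelta, hq', hψ0, EReal.top_add_of_ne_bot (hwt q')]
  have hmono : Monotone (· + qwt π s hs ι ψ q) := fun _ _ h => add_le_add h le_rfl
  have : Nonempty Q := ⟨1⟩
  simp_rw [qval, hrow]
  exact (hmono.map_iInf_of_finite _).symm

end QValue

theorem stmt_13_general (π : G →* Q) (s : Q → G)
    (hs : ∀ q, π (s q) = q) (hs1 : s 1 = 1)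
    (c : G →* D ≃+* D) (ι : ↥π.ker →* Dˣ)
    (hinner : ∀ (h : ↥π.ker) (x : D),
      c (h : G) x = (ι h : D) * x * ((ι h)⁻¹ : Dˣ))
    (ψ : D → EReal) (hψ0 : ψ 0 = ⊤)
    (hψreal : ∀ x : D, x ≠ 0 → ψ x ≠ ⊤ ∧ ψ x ≠ ⊥)
    (hψmul : ∀ x y : D, x ≠ 0 → y ≠ 0 → ψ (x * y) = ψ x + ψ y)
    (x y : D) (q : Q) :
    (qval π s hs c ι ψ (qdelta Q 1 (c (s q) x)) =
        qval π s hs c ι ψ (qdelta Q 1 x)) ∧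
    (qval π s hs c ι ψ (qdelta Q q x) =
        qval π s hs c ι ψ (qdelta Q q 1) + qval π s hs c ι ψ (qdelta Q 1 x) ∧
      qval π s hs c ι ψ (qdelta Q q (c (s q) x)) =
        qval π s hs c ι ψ (qdelta Q q 1) + qval π s hs c ι ψ (qdelta Q 1 x)) ∧
    (qval π s hs c ι ψ (qdelta Q 1 x) + qval π s hs c ι ψ (qdelta Q 1 y) ≤
      qval π s hs c ι ψ (qdelta Q 1 (x * y))) := by
  have hψ1 := psi_one_eq_zero hψreal hψmul
  have hval := qval_qdelta hs (c := c) (ι := ι) hψ0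
    (qwt_ne_bot hs fun u => (hψreal u u.ne_zero).2)
  have hw1 := qwt_one hs (ι := ι) hs1 hψ1
  have hconj := iInf_psi_conj_section_conj hs hψ1 hψmul hinner
  have hunit : ⨅ p, ψ (c (s p) 1) = 0 := by simp [hψ1]
  refine ⟨?_, ⟨?_, ?_⟩, ?_⟩
  · rw [hval, hval, hconj]
  · rw [hval, hval, hval, hunit, hw1, zero_add, add_zero, add_comm]
  · rw [hval, hval, hval, hunit, hw1, zero_add, add_zero, hconj, add_comm]
  · simp only [hval, hw1, add_zero, map_mul]
    exact EReal.add_iInf_le_iInf_add.trans (iInf_mono fun p => add_le_psi_mul hψ0 hψmul _ _)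

/-- With `Q` a finite quotient of `G` with kernel `H`, `s` a section with
`s 1 = 1`, `D = D(H)` the Linnell skew-field of `H` (carrying the conjugation action `c` of
`G` and the extension `ψ` of a real character of `H` to a homomorphism
`D ∖ {0} → ℝ` with `ψ 0 = ∞`), for all `x, y ∈ D(H)` and `q ∈ Q`:
(a) `qval ψ (s q · x · s q⁻¹) = qval ψ x`;
(b) `qval ψ (x · q) = qval ψ (q · x) = qval ψ q + qval ψ x`;
(c) `qval ψ (x y) ≥ qval ψ x + qval ψ y`. -/
theorem stmt_13 (π : G →* Q) (hπ : Function.Surjective π) (s : Q → G)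
    (hs : ∀ q, π (s q) = q) (hs1 : s 1 = 1)
    (c : G →* D ≃+* D) (ι : ↥π.ker →* Dˣ)
    (hcι : ∀ (g : G) (h : ↥π.ker),
      c g (ι h) = ι ⟨g * h * g⁻¹, Subgroup.Normal.conj_mem inferInstance _ h.2 g⟩)
    (hinner : ∀ (h : ↥π.ker) (x : D),
      c (h : G) x = (ι h : D) * x * ((ι h)⁻¹ : Dˣ))
    (ψ : D → EReal) (hψ0 : ψ 0 = ⊤)
    (hψreal : ∀ x : D, x ≠ 0 → ψ x ≠ ⊤ ∧ ψ x ≠ ⊥)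
    (hψmul : ∀ x y : D, x ≠ 0 → y ≠ 0 → ψ (x * y) = ψ x + ψ y)
    (hψadd : ∀ x y : D, min (ψ x) (ψ y) ≤ ψ (x + y))
    (x y : D) (q : Q) :
    (qval π s hs c ι ψ (qdelta Q 1 (c (s q) x)) =
        qval π s hs c ι ψ (qdelta Q 1 x)) ∧
    (qval π s hs c ι ψ (qdelta Q q x) =
        qval π s hs c ι ψ (qdelta Q q 1) + qval π s hs c ι ψ (qdelta Q 1 x) ∧
      qval π s hs c ι ψ (qdelta Q q (c (s q) x)) =
        qval π s hs c ι ψ (qdelta Q q 1) + qval π s hs c ι ψ (qdelta Q 1 x)) ∧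
    (qval π s hs c ι ψ (qdelta Q 1 x) + qval π s hs c ι ψ (qdelta Q 1 y) ≤
      qval π s hs c ι ψ (qdelta Q 1 (x * y))) :=
  stmt_13_general π s hs hs1 c ι hinner ψ hψ0 hψreal hψmul x y q
end
end

section
/- Suppose the chain 𝓛 is empty, so L_0 = H¹(G;ℝ) and L_i = H¹(H_i;ℝ) for i ≥ 0 with the natural inclusions L_i ⊆ L_j for i ≤ j. If U is a rich subset of H¹(H_n;ℝ), then the closure of U in H¹(H_n;ℝ) contains H¹(G;ℝ). -/
/-! Taking the interior of a closure never leaves the closure, so the closure of each level's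
witness of richness is contained in the closure of the set one level up; at the bottom level the
witness contains the dense set of irrational points. -/

/-- `U` is open in the subspace `A` of `X`. -/
def opIn {X : Type*} [TopologicalSpace X] (A U : Set X) : Prop :=
  ∃ O : Set X, IsOpen O ∧ U = O ∩ A

/-- The closure of `U` in the subspace `A` of `X`. -/
def clIn {X : Type*} [TopologicalSpace X] (A U : Set X) : Set X :=
  closure U ∩ A

/-- The interior of `U` in the subspace `A` of `X`. -/
def intIn {X : Type*} [TopologicalSpace X] (A U : Set X) : Set X :=
  A \ closure (A \ U)

/-- Richness of a subset of the `i`-th level `L i` of a chain of subspaces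
`L 0 ⊆ L 1 ⊆ ⋯` of `X`, each level carrying a fixed dense set `Irr i` of "irrational"
points.  A subset of the bottom level is rich iff it is very rich, i.e. open in `L 0` and
containing all irrational points of `L 0`; a subset `U` of `L (i+1)` is rich iff it is open
in `L (i+1)` and the interior of its closure (taken in `L (i+1)`) meets `L i` in a rich
subset of `L i`. -/
def Rich {X : Type*} [TopologicalSpace X] (L Irr : ℕ → Set X) : ℕ → Set X → Prop
  | 0, U => opIn (L 0) U ∧ Irr 0 ⊆ U
  | (i + 1), U => opIn (L (i + 1)) U ∧
      Rich L Irr i (intIn (L (i + 1)) (clIn (L (i + 1)) U) ∩ L i)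

theorem intIn_clIn_subset_closure {X : Type*} [TopologicalSpace X] (A U : Set X) :
    intIn A (clIn A U) ⊆ closure U := by
  rintro x ⟨hxA, hx⟩
  by_contra hxU
  exact hx (subset_closure ⟨hxA, fun hxcl => hxU hxcl.1⟩)

theorem stmt_18_general {X : Type*} [TopologicalSpace X] (L Irr : ℕ → Set X)
    (hdense : ∀ i, L i ⊆ closure (Irr i)) :
    ∀ (n : ℕ) (U : Set X), Rich L Irr n U → L 0 ⊆ closure U := by
  intro n
  induction n with
  | zero => exact fun U hU => (hdense 0).trans (closure_mono hU.2)
  | succ n ih =>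
    intro U hU
    calc L 0 ⊆ closure (intIn (L (n + 1)) (clIn (L (n + 1)) U) ∩ L n) := ih _ hU.2
      _ ⊆ closure U :=
        closure_minimal (Set.inter_subset_left.trans (intIn_clIn_subset_closure _ _))
          isClosed_closure

/-- Suppose the auxiliary chain `𝓛` is empty, so that the levels are
`L 0 = H¹(G; ℝ) ⊆ L 1 ⊆ ⋯` with `L i = H¹(H_i; ℝ)` under the natural inclusions, each
carrying its dense set of irrational characters.  If `U` is a rich subset of
`L n = H¹(H_n; ℝ)`, then the closure of `U` contains `L 0 = H¹(G; ℝ)`. -/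
theorem stmt_18 {X : Type*} [TopologicalSpace X] (L Irr : ℕ → Set X)
    (hmono : ∀ i, L i ⊆ L (i + 1)) (hIrr : ∀ i, Irr i ⊆ L i)
    (hdense : ∀ i, L i ⊆ closure (Irr i)) :
    ∀ (n : ℕ) (U : Set X), Rich L Irr n U → L 0 ⊆ closure U :=
  stmt_18_general L Irr hdense
end
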